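/- Let n ≥ 2 be an integer, let α be a real number with 0 ≤ α < 1, and let Θ ∈ L¹(ℝ²) ∩ L^∞(ℝ²) satisfy Θ(R_{2π/n} Y) = Θ(Y) for all Y ∈ ℝ². Define V(X) := C_α ∫_{ℝ²} (X − Y)^⊥ / |X − Y|^{2+α} · Θ(Y) dY. Then: (i) for every integer k and every X ∈ ℝ², V(X) = R_{−2πk/n}( V(R_{2πk/n} X) ); and (ii) ∫_{B_R} V(X) dX = 0 for every R > 0, where B_R is the ball of radius R centered at the origin. -/

import Mathlib

open MeasureTheory

/-- `C_α = (2^α/(2π)) Γ(1+α/2)/Γ(1-α/2)`. -/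
noncomputable def Cconst (α : ℝ) : ℝ :=
  ((2:ℝ) ^ α / (2 * Real.pi)) * Real.Gamma (1 + α/2) / Real.Gamma (1 - α/2)

/-- The α-Biot-Savart velocity, written on `ℝ² ≅ ℂ`: the perpendicular
`(a,b)^⊥ = (-b,a)` corresponds to multiplication by `i`, so
`V(X) = C_α ∫ (X-Y)^⊥/|X-Y|^{2+α} Θ(Y) dY = C_α ∫ i(X-Y) Θ(Y)/|X-Y|^{2+α} dY`. -/
noncomputable def Vfield (α : ℝ) (Θ : ℂ → ℝ) (X : ℂ) : ℂ :=
  (Cconst α : ℂ) *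
    ∫ Y : ℂ, Complex.I * (X - Y) * (Θ Y : ℂ) / ((‖X - Y‖ ^ (2+α) : ℝ) : ℂ)

/-!
Multiplication by a unimodular `u` is a rotation of `ℂ ≅ ℝ²`, so it preserves Lebesgue
measure and commutes with `X ↦ i X`; hence a change of variables gives
`V(u X) = u V(X)` whenever `Θ` is invariant under `u`. Iterating the symmetry with
`u = ζ = e^{2πi/n}` gives (i). For (ii), rotating the ball shows that `I = ∫_{B_R} V`
satisfies `I = ζ I`, and `ζ ≠ 1` because `n ≥ 2`.
-/

section RotationInvariance

variable {E : Type*} [NormedAddCommGroup E] [NormedSpace ℝ E] {u : ℂ}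

lemma mul_left_eq_rotation (hu : ‖u‖ = 1) :
    (u * ·) = rotation (⟨u, mem_sphere_zero_iff_norm.mpr hu⟩ : Circle) :=
  rfl

lemma measurePreserving_mul_left_of_norm_eq_one (hu : ‖u‖ = 1) :
    MeasurePreserving (u * ·) volume volume := by
  rw [mul_left_eq_rotation hu]
  exact (rotation _).measurePreserving

lemma measurableEmbedding_mul_left_of_norm_eq_one (hu : ‖u‖ = 1) :
    MeasurableEmbedding (u * ·) := by
  rw [mul_left_eq_rotation hu]
  exact (rotation _).toHomeomorph.measurableEmbedding

lemma integral_comp_mul_left_of_norm_eq_one (hu : ‖u‖ = 1) (f : ℂ → E) :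
    ∫ Y, f (u * Y) = ∫ Y, f Y :=
  (measurePreserving_mul_left_of_norm_eq_one hu).integral_comp
    (measurableEmbedding_mul_left_of_norm_eq_one hu) f

lemma setIntegral_ball_comp_mul_left_of_norm_eq_one (hu : ‖u‖ = 1) (f : ℂ → E) (R : ℝ) :
    ∫ X in Metric.ball 0 R, f (u * X) = ∫ X in Metric.ball 0 R, f X := by
  have hpre : (u * ·) ⁻¹' Metric.ball (0 : ℂ) R = Metric.ball 0 R := by
    ext X
    simp [hu]
  simpa [hpre] using (measurePreserving_mul_left_of_norm_eq_one hu).setIntegral_preimage_emb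
    (measurableEmbedding_mul_left_of_norm_eq_one hu) f (Metric.ball 0 R)

lemma setIntegral_ball_eq_zero_of_mul_left {f : ℂ → ℂ} (hu : ‖u‖ = 1) (hu1 : u ≠ 1)
    (hf : ∀ X, f (u * X) = u * f X) (R : ℝ) :
    ∫ X in Metric.ball 0 R, f X = 0 := by
  have hfix : u * ∫ X in Metric.ball 0 R, f X = ∫ X in Metric.ball 0 R, f X := by
    rw [← integral_const_mul, ← setIntegral_ball_comp_mul_left_of_norm_eq_one hu f R]
    simp only [hf]
  have hzero : (u - 1) * ∫ X in Metric.ball 0 R, f X = 0 := by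
    rw [sub_mul, one_mul, hfix, sub_self]
  exact (mul_eq_zero.mp hzero).resolve_left (sub_ne_zero.mpr hu1)

end RotationInvariance

lemma apply_zpow_mul_eq_of_apply_mul_eq {M β : Type*} [GroupWithZero M] {f : M → β} {c : M}
    (hc : c ≠ 0) (h : ∀ y, f (c * y) = f y) (k : ℤ) (y : M) : f (c ^ k * y) = f y := by
  induction k using Int.induction_on generalizing y with
  | zero => simp
  | succ m ih => rw [add_comm, zpow_one_add₀ hc, mul_assoc, h, ih]
  | pred m ih =>
    rw [← h, ← mul_assoc, ← zpow_one_add₀ hc, add_sub_cancel, ih]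

lemma Vfield_mul_of_norm_eq_one (α : ℝ) {Θ : ℂ → ℝ} {u : ℂ} (hu : ‖u‖ = 1)
    (hΘ : ∀ Y, Θ (u * Y) = Θ Y) (X : ℂ) :
    Vfield α Θ (u * X) = u * Vfield α Θ X := by
  have hintegrand : ∀ Y : ℂ,
      Complex.I * (u * X - u * Y) * (Θ (u * Y) : ℂ) / ((‖u * X - u * Y‖ ^ (2 + α) : ℝ) : ℂ) =
        u * (Complex.I * (X - Y) * (Θ Y : ℂ) / ((‖X - Y‖ ^ (2 + α) : ℝ) : ℂ)) := by
    intro Y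
    rw [← mul_sub, hΘ, norm_mul, hu, one_mul]
    ring
  unfold Vfield
  rw [← integral_comp_mul_left_of_norm_eq_one hu]
  simp only [hintegrand, integral_const_mul]
  ring

theorem stmt13_general (n : ℕ) (hn : 2 ≤ n) (α : ℝ)
    (Θ : ℂ → ℝ)
    (hsym : ∀ Y : ℂ, Θ (Complex.exp (2*Real.pi*Complex.I/(n:ℂ)) * Y) = Θ Y) :
    (∀ k : ℤ, ∀ X : ℂ,
      Vfield α Θ X =
        Complex.exp (-(2*Real.pi*(k:ℂ)/(n:ℂ)) * Complex.I) *
          Vfield α Θ (Complex.exp ((2*Real.pi*(k:ℂ)/(n:ℂ)) * Complex.I) * X)) ∧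
    (∀ R : ℝ, 0 < R → (∫ X in Metric.ball (0:ℂ) R, Vfield α Θ X) = 0) := by
  set ζ := Complex.exp (2 * Real.pi * Complex.I / n)
  have hζ : IsPrimitiveRoot ζ n := Complex.isPrimitiveRoot_exp n (by omega)
  have hζ_norm : ‖ζ‖ = 1 := hζ.norm'_eq_one (by omega)
  have hζ0 : ζ ≠ 0 := Complex.exp_ne_zero _
  have hexp : ∀ k : ℤ, Complex.exp ((2 * Real.pi * k / n) * Complex.I) = ζ ^ k := fun k => by
    rw [← Complex.exp_int_mul]
    ring_nf
  refine ⟨fun k X => ?_, fun R _ =>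
    setIntegral_ball_eq_zero_of_mul_left hζ_norm (hζ.ne_one hn)
      (Vfield_mul_of_norm_eq_one α hζ_norm hsym) R⟩
  rw [neg_mul, Complex.exp_neg, hexp,
    Vfield_mul_of_norm_eq_one α (by rw [norm_zpow, hζ_norm, one_zpow])
      (apply_zpow_mul_eq_of_apply_mul_eq hζ0 hsym k),
    ← mul_assoc, inv_mul_cancel₀ (zpow_ne_zero k hζ0), one_mul]

theorem stmt13 (n : ℕ) (hn : 2 ≤ n) (α : ℝ) (hα0 : 0 ≤ α) (hα1 : α < 1)
    (Θ : ℂ → ℝ) (hL1 : Integrable Θ) (hLinf : MemLp Θ ⊤ volume)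
    (hsym : ∀ Y : ℂ, Θ (Complex.exp (2*Real.pi*Complex.I/(n:ℂ)) * Y) = Θ Y) :
    (∀ k : ℤ, ∀ X : ℂ,
      Vfield α Θ X =
        Complex.exp (-(2*Real.pi*(k:ℂ)/(n:ℂ)) * Complex.I) *
          Vfield α Θ (Complex.exp ((2*Real.pi*(k:ℂ)/(n:ℂ)) * Complex.I) * X)) ∧
    (∀ R : ℝ, 0 < R → (∫ X in Metric.ball (0:ℂ) R, Vfield α Θ X) = 0) :=
  stmt13_general n hn α Θ hsym
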